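/- arXiv:1702.02218 — 2 statements merged into one kernel-verified Lean document; each statement's English description precedes it below -/
import Mathlib

section
/- Let Z be an (abstract) simplicial complex of dimension at most N with vertex set V, realized with the ℓ¹-metric d¹(a,b) = ∑_{v∈V} |a_v − b_v| on points a = ∑ a_v v with a_v ∈ [0,1], ∑ a_v = 1. Let s be a simplicial automorphism of Z and x a point with d¹(x, s·x) < 1/(N+1)². Then there exists a vertex v with x_v ≠ 0 such that the entire forward orbit {v, sv, s²v, ...} is contained in the support {w : x_w ≠ 0} of x. -/
/-- The ℓ¹-distance between two finitely supported real functions on the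
vertex set `V`. -/
noncomputable def ellOneDist {V : Type*} [DecidableEq V] (f g : V →₀ ℝ) : ℝ :=
  ∑ v ∈ f.support ∪ g.support, |f v - g v|

theorem stmt9 {V : Type*} [DecidableEq V] (N : ℕ) (s : V ≃ V) (x : V →₀ ℝ)
    (hpos : ∀ v, 0 ≤ x v)
    (hsum : ∑ v ∈ x.support, x v = 1)
    (hcard : x.support.card ≤ N + 1)
    (hd : ellOneDist x (Finsupp.mapDomain s x) < 1 / ((N : ℝ) + 1) ^ 2) :
    ∃ v ∈ x.support, ∀ k : ℕ, (⇑s)^[k] v ∈ x.support := by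
  classical
  by_contra hcon
  push_neg at hcon
  set y := Finsupp.mapDomain s x with hy
  have hNpos : (0:ℝ) < (N:ℝ) + 1 := by positivity
  have hne : x.support.Nonempty := by
    by_contra h
    rw [Finset.not_nonempty_iff_eq_empty] at h
    rw [h] at hsum
    simp at hsum
  obtain ⟨v₀, hv₀, hv₀big⟩ : ∃ v ∈ x.support, 1 / ((N:ℝ)+1) ≤ x v := by
    by_contra h
    push_neg at h
    have hlt : ∑ v ∈ x.support, x v < ∑ _v ∈ x.support, 1/((N:ℝ)+1) :=
      Finset.sum_lt_sum_of_nonempty hne (fun v hv => h v hv)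
    rw [hsum, Finset.sum_const, nsmul_eq_mul] at hlt
    have hle : (x.support.card : ℝ) ≤ (N:ℝ)+1 := by exact_mod_cast hcard
    have hpos' : (0:ℝ) < 1/((N:ℝ)+1) := by positivity
    have hone : ((N:ℝ)+1) * (1/((N:ℝ)+1)) = 1 := by field_simp
    linarith [mul_le_mul_of_nonneg_right hle hpos'.le]
  obtain ⟨k₀, hk₀⟩ := hcon v₀ hv₀
  have hex : ∃ k, (⇑s)^[k] v₀ ∉ x.support := ⟨k₀, hk₀⟩
  set k := Nat.find hex with hkdef
  have hkout : (⇑s)^[k] v₀ ∉ x.support := Nat.find_spec hex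
  have hkin : ∀ i < k, (⇑s)^[i] v₀ ∈ x.support := fun i hi => by
    by_contra h
    exact absurd (Nat.find_le h) (not_le.mpr hi)
  set F : ℕ → ℝ := fun i => x ((⇑s)^[i] v₀) with hF
  -- y at orbit points
  have hyval : ∀ i : ℕ, y ((⇑s)^[i+1] v₀) = F i := by
    intro i
    have : (⇑s)^[i+1] v₀ = s ((⇑s)^[i] v₀) := Function.iterate_succ_apply' _ _ _
    rw [this, hy]
    exact Finsupp.mapDomain_apply s.injective x _
  -- injectivity of the orbit map on range k
  have hinj : ∀ a ∈ Finset.range k, ∀ b ∈ Finset.range k,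
      (⇑s)^[a+1] v₀ = (⇑s)^[b+1] v₀ → a = b := by
    have key : ∀ a b : ℕ, a < b → b < k → (⇑s)^[a+1] v₀ = (⇑s)^[b+1] v₀ → False := by
      intro a b hab hbk heq
      have heq' : (⇑s)^[a+1] v₀ = (⇑s)^[a+1] ((⇑s)^[b-a] v₀) := by
        rw [← Function.iterate_add_apply]
        rw [show a+1+(b-a) = b+1 by omega]
        exact heq
      have hper : v₀ = (⇑s)^[b-a] v₀ :=
        (Function.Injective.iterate s.injective (a+1)) heq'
      have h2 : (⇑s)^[k-(b-a)] ((⇑s)^[b-a] v₀) = (⇑s)^[k] v₀ := by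
        rw [← Function.iterate_add_apply]
        congr 1
        omega
      rw [← hper] at h2
      rw [← h2] at hkout
      exact hkout (hkin _ (by omega))
    intro a ha b hb heq
    simp only [Finset.mem_range] at ha hb
    rcases lt_trichotomy a b with h | h | h
    · exact absurd heq (fun e => key a b h hb e)
    · exact h
    · exact absurd heq.symm (fun e => key b a h ha e)
  -- telescoping
  have htel : ∑ i ∈ Finset.range k, (F i - F (i+1)) = F 0 - F k :=
    Finset.sum_range_sub' F k
  have hstep : ∀ i ∈ Finset.range k,
      F i - F (i+1) ≤ |x ((⇑s)^[i+1] v₀) - y ((⇑s)^[i+1] v₀)| := by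
    intro i _
    rw [hyval i]
    have : F i - F (i+1) ≤ |F i - F (i+1)| := le_abs_self _
    calc F i - F (i+1) ≤ |F i - F (i+1)| := le_abs_self _
      _ = |F (i+1) - F i| := abs_sub_comm _ _
      _ = |x ((⇑s)^[i+1] v₀) - F i| := rfl
  have hsum1 : ∑ i ∈ Finset.range k, (F i - F (i+1))
      ≤ ∑ i ∈ Finset.range k, |x ((⇑s)^[i+1] v₀) - y ((⇑s)^[i+1] v₀)| :=
    Finset.sum_le_sum hstep
  have himg : ∑ w ∈ (Finset.range k).image (fun i => (⇑s)^[i+1] v₀), |x w - y w|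
      = ∑ i ∈ Finset.range k, |x ((⇑s)^[i+1] v₀) - y ((⇑s)^[i+1] v₀)| :=
    Finset.sum_image hinj
  have hsub : (Finset.range k).image (fun i => (⇑s)^[i+1] v₀) ⊆ x.support ∪ y.support := by
    intro w hw
    rw [Finset.mem_image] at hw
    obtain ⟨i, hi, rfl⟩ := hw
    rw [Finset.mem_range] at hi
    apply Finset.mem_union_right
    rw [Finsupp.mem_support_iff, hyval i]
    exact Finsupp.mem_support_iff.mp (hkin i hi)
  have hsum2 : ∑ w ∈ (Finset.range k).image (fun i => (⇑s)^[i+1] v₀), |x w - y w|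
      ≤ ellOneDist x y := by
    apply Finset.sum_le_sum_of_subset_of_nonneg hsub
    intro w _ _
    exact abs_nonneg _
  have hFk : F k = 0 := Finsupp.notMem_support_iff.mp hkout
  have hF0 : F 0 = x v₀ := by simp [hF]
  have hchain : x v₀ ≤ ellOneDist x y := by
    have := le_trans (le_trans (le_of_eq htel.symm) hsum1) (le_of_eq himg.symm)
    rw [hF0, hFk, sub_zero] at this
    exact le_trans this hsum2
  have hsq : 1 / ((N:ℝ)+1)^2 ≤ 1 / ((N:ℝ)+1) := by
    apply div_le_div_of_nonneg_left (by norm_num) hNpos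
    nlinarith
  linarith
end

section
/- Let s : V → V be a bijection of the vertex set of a simplicial complex inducing an isometry of the realization with the ℓ¹-metric, let x be a point with support V_x of cardinality at most N+1, and suppose d¹(x, s·x) < ε where ε = 1/(N+1)². If for a vertex v ∈ V_x there is a smallest n(v) ≥ 1 with s^{n(v)}v ∉ V_x, then x_v < n(v)·ε ≤ 1/(N+1). -/
lemma abs_le_ellOneDist {V : Type*} [DecidableEq V] (f g : V →₀ ℝ) (w : V) :
    |f w - g w| ≤ ellOneDist f g := by
  by_cases hw : w ∈ f.support ∪ g.support
  · exact Finset.single_le_sum (f := fun i => |f i - g i|) (fun i _ => abs_nonneg _) hw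
  · simp only [Finset.mem_union, Finsupp.mem_support_iff, not_or, not_not] at hw
    rw [hw.1, hw.2, sub_zero, abs_zero]
    exact Finset.sum_nonneg fun i _ => abs_nonneg _

theorem stmt10 {V : Type*} [DecidableEq V] (N : ℕ) (s : V ≃ V) (x : V →₀ ℝ)
    (hpos : ∀ v, 0 ≤ x v)
    (hsum : ∑ v ∈ x.support, x v = 1)
    (hcard : x.support.card ≤ N + 1)
    (hd : ellOneDist x (Finsupp.mapDomain s x) < 1 / ((N : ℝ) + 1) ^ 2)
    (v : V) (hv : v ∈ x.support)
    (n : ℕ) (hn1 : 1 ≤ n)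
    (hnot : (⇑s)^[n] v ∉ x.support)
    (hmin : ∀ m : ℕ, 1 ≤ m → m < n → (⇑s)^[m] v ∈ x.support) :
    x v < (n : ℝ) * (1 / ((N : ℝ) + 1) ^ 2) ∧
      (n : ℝ) * (1 / ((N : ℝ) + 1) ^ 2) ≤ 1 / ((N : ℝ) + 1) := by
  set ε : ℝ := 1 / ((N : ℝ) + 1) ^ 2 with hε
  set d : ℝ := ellOneDist x (Finsupp.mapDomain s x) with hdd
  -- each step bounded by d
  have hstep : ∀ k : ℕ, |x ((⇑s)^[k] v) - x ((⇑s)^[k+1] v)| ≤ d := by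
    intro k
    have h1 : (Finsupp.mapDomain s x) ((⇑s)^[k+1] v) = x ((⇑s)^[k] v) := by
      rw [Function.iterate_succ_apply']
      exact Finsupp.mapDomain_apply s.injective x _
    have := abs_le_ellOneDist x (Finsupp.mapDomain s x) ((⇑s)^[k+1] v)
    rw [h1, abs_sub_comm] at this
    exact this
  -- telescoping
  have htel : x v = ∑ k ∈ Finset.range n, (x ((⇑s)^[k] v) - x ((⇑s)^[k+1] v)) := by
    have h0 : x ((⇑s)^[n] v) = 0 := Finsupp.notMem_support_iff.mp hnot
    rw [Finset.sum_range_sub' (fun k => x ((⇑s)^[k] v)), Function.iterate_zero_apply, h0,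
      sub_zero]
  have hxd : x v ≤ (n : ℝ) * d := by
    calc x v = ∑ k ∈ Finset.range n, (x ((⇑s)^[k] v) - x ((⇑s)^[k+1] v)) := htel
      _ ≤ ∑ k ∈ Finset.range n, |x ((⇑s)^[k] v) - x ((⇑s)^[k+1] v)| :=
          Finset.sum_le_sum fun k _ => le_abs_self _
      _ ≤ ∑ k ∈ Finset.range n, d := Finset.sum_le_sum fun k _ => hstep k
      _ = (n : ℝ) * d := by simp [mul_comm]
  have hnpos : (0 : ℝ) < n := by exact_mod_cast hn1
  have h1 : x v < (n : ℝ) * ε :=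
    lt_of_le_of_lt hxd (by exact mul_lt_mul_of_pos_left hd hnpos)
  -- n ≤ N + 1
  have claim : ∀ i j : ℕ, i < j → j < n → (⇑s)^[i] v = (⇑s)^[j] v → False := by
    intro i j hlt hj hij
    have key : (⇑s)^[n] v = (⇑s)^[n - j + i] v := by
      have hn' : n = (n - j) + j := by omega
      calc (⇑s)^[n] v = (⇑s)^[n - j] ((⇑s)^[j] v) := by
            conv_lhs => rw [hn', Function.iterate_add_apply]
        _ = (⇑s)^[n - j] ((⇑s)^[i] v) := by rw [hij]
        _ = (⇑s)^[n - j + i] v := by rw [← Function.iterate_add_apply]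
    have hmem := hmin (n - j + i) (by omega) (by omega)
    rw [← key] at hmem
    exact hnot hmem
  have hinj : Set.InjOn (fun k => (⇑s)^[k] v) (Finset.range n) := by
    intro i hi j hj hij
    simp only [Finset.coe_range, Set.mem_Iio] at hi hj
    rcases lt_trichotomy i j with h | h | h
    · exact absurd (claim i j h hj hij) (by simp)
    · exact h
    · exact absurd (claim j i h hi hij.symm) (by simp)
  have hmemall : ∀ k ∈ Finset.range n, (⇑s)^[k] v ∈ x.support := by
    intro k hk
    rcases Nat.eq_zero_or_pos k with rfl | hk0
    · simpa using hv
    · exact hmin k hk0 (Finset.mem_range.mp hk)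
  have hcard2 : n ≤ N + 1 := by
    have := Finset.card_le_card_of_injOn (fun k => (⇑s)^[k] v) hmemall hinj
    simpa using le_trans this hcard
  have hN1 : (0 : ℝ) < (N : ℝ) + 1 := by positivity
  have h2 : (n : ℝ) * ε ≤ 1 / ((N : ℝ) + 1) := by
    have hn' : (n : ℝ) ≤ (N : ℝ) + 1 := by exact_mod_cast hcard2
    have heq : ((N : ℝ) + 1) * (1 / ((N : ℝ) + 1) ^ 2) = 1 / ((N : ℝ) + 1) := by
      field_simp
    calc (n : ℝ) * ε ≤ ((N : ℝ) + 1) * (1 / ((N : ℝ) + 1) ^ 2) :=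
          mul_le_mul_of_nonneg_right hn' (by positivity)
      _ = 1 / ((N : ℝ) + 1) := heq
  exact ⟨h1, h2⟩
end
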